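/- There exists a constant c>0 such that for every k ≥ 2 the following holds. Let G be the (k,k)-lollipop graph on n=2k vertices with m edges (a complete graph on k vertices and a path on k vertices connected by a bridge edge), whose diameter is D=k+1. Then every population protocol that solves exact majority on G admits an input with positive bias on which the expected stabilization time satisfies E[T] ≥ c · m · k; in particular the worst-case expected stabilization time is Ω(D·n²). -/

import Mathlib

open MeasureTheory ProbabilityTheory Finset
open scoped ENNReal NNReal

namespace PP

variable {V : Type*}

/-- The number of edges of a graph. -/
noncomputable def numEdges (G : SimpleGraph V) : ℕ := Nat.card G.edgeSet

/-- The transition matrix of the (lazy) population random walk. -/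
noncomputable def popMat [Fintype V] [DecidableEq V] (G : SimpleGraph V) [DecidableRel G.Adj] :
    Matrix V V ℝ :=
  Matrix.of fun u v =>
    if u = v then 1 - (G.degree u : ℝ) / (2 * numEdges G)
    else if G.Adj u v then 1 / (2 * numEdges G) else 0

/-- The second largest eigenvalue of the population random walk matrix, via the
Rayleigh quotient over vectors orthogonal to the constant vector. -/
noncomputable def lambdaTwo [Fintype V] [DecidableEq V] (G : SimpleGraph V)
    [DecidableRel G.Adj] : ℝ :=
  sSup {r : ℝ | ∃ x : V → ℝ, x ≠ 0 ∧ (∑ v, x v) = 0 ∧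
    r = (∑ u, ∑ v, x u * popMat G u v * x v) / (∑ v, (x v) ^ 2)}

/-- The relaxation time of the population random walk. -/
noncomputable def tauRel [Fintype V] [DecidableEq V] (G : SimpleGraph V)
    [DecidableRel G.Adj] : ℝ :=
  1 / (1 - lambdaTwo G)

/-- The edge expansion of a graph. -/
noncomputable def edgeExpansion [Fintype V] [DecidableEq V] (G : SimpleGraph V) [DecidableRel G.Adj] : ℝ :=
  sInf {r : ℝ | ∃ S : Finset V, S.Nonempty ∧ 2 * S.card ≤ Fintype.card V ∧
    r = ((Finset.univ.filter fun p : V × V => p.1 ∈ S ∧ p.2 ∉ S ∧ G.Adj p.1 p.2).card : ℝ) /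
        (S.card : ℝ)}

/-- The scheduler `e` is an i.i.d. sequence, each step being an ordered pair of adjacent
nodes chosen uniformly at random among the `2m` ordered pairs of adjacent nodes. -/
def IsUniformSched [Fintype V] (G : SimpleGraph V) {Ω : Type*} [MeasurableSpace Ω]
    (μ : Measure Ω) (e : ℕ → Ω → V × V) : Prop :=
  iIndepFun (m := fun _ : ℕ => (⊤ : MeasurableSpace (V × V))) e μ ∧
    (∀ t : ℕ, ∀ p : V × V, G.Adj p.1 p.2 →
      μ {ω | e t ω = p} = ENNReal.ofReal (1 / (2 * (numEdges G : ℝ)))) ∧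
    (∀ t : ℕ, ∀ p : V × V, ¬ G.Adj p.1 p.2 → μ {ω | e t ω = p} = 0)

/-- A population protocol with state set `Λ`. -/
structure Protocol (Λ : Type*) where
  trans : Λ × Λ → Λ × Λ
  input : Bool → Λ
  output : Λ → Bool

variable {Λ : Type*}

/-- One interaction at an ordered pair `p`: the states of the two nodes are updated
by the transition function, all other nodes are unchanged. -/
def applyStep [DecidableEq V] (Ξ : Λ × Λ → Λ × Λ) (x : V → Λ) (p : V × V) : V → Λ :=
  fun w =>
    if w = p.1 then (Ξ (x p.1, x p.2)).1
    else if w = p.2 then (Ξ (x p.1, x p.2)).2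
    else x w

/-- The execution of a protocol from initial configuration `x0` under schedule `σ`. -/
def exec [DecidableEq V] (Ξ : Λ × Λ → Λ × Λ) (x0 : V → Λ) (σ : ℕ → V × V) : ℕ → V → Λ
  | 0 => x0
  | t + 1 => applyStep Ξ (exec Ξ x0 σ t) (σ t)

/-- A configuration is stable if every configuration reachable from it (by finitely many
interactions along edges of `G`) has the same output at every node. -/
def IsStable [DecidableEq V] (G : SimpleGraph V) (Ξ : Λ × Λ → Λ × Λ) (out : Λ → Bool)
    (x : V → Λ) : Prop :=
  ∀ y, Relation.ReflTransGen
      (fun a b => ∃ p : V × V, G.Adj p.1 p.2 ∧ b = applyStep Ξ a p) x y →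
    ∀ v, out (y v) = out (x v)

/-- The stabilization time of an execution (`∞` if it never stabilizes). -/
noncomputable def stabTime [DecidableEq V] (G : SimpleGraph V) (Ξ : Λ × Λ → Λ × Λ)
    (out : Λ → Bool) (x0 : V → Λ) (σ : ℕ → V × V) : ℝ≥0∞ :=
  sInf {c : ℝ≥0∞ | ∃ t : ℕ, c = (t : ℝ≥0∞) ∧ IsStable G Ξ out (exec Ξ x0 σ t)}

/-- The number of nodes with input value `b`. -/
def cnt [Fintype V] (f : V → Bool) (b : Bool) : ℕ :=
  (Finset.univ.filter fun v => f v = b).card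

/-- The (normalized) bias of an input. -/
noncomputable def bias [Fintype V] (f : V → Bool) : ℝ :=
  |(cnt f false : ℝ) - (cnt f true : ℝ)| / (Fintype.card V : ℝ)

/-- The majority input value. -/
def majOf [Fintype V] (f : V → Bool) : Bool :=
  decide (cnt f false < cnt f true)

/-- The initial configuration determined by an input. -/
def initConfig (P : Protocol Λ) (f : V → Bool) : V → Λ := fun v => P.input (f v)

/-- A protocol solves exact majority (w.r.t. a given scheduler) if on every input with
positive bias it almost surely reaches a stable configuration in which every node
outputs the majority input value. -/
def SolvesMajority [Fintype V] [DecidableEq V] (G : SimpleGraph V) (P : Protocol Λ)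
    {Ω : Type*} [MeasurableSpace Ω] (μ : Measure Ω) (e : ℕ → Ω → V × V) : Prop :=
  ∀ f : V → Bool, 0 < bias f →
    μ {ω | ∃ t : ℕ,
        IsStable G P.trans P.output (exec P.trans (initConfig P f) (fun s => e s ω) t) ∧
        ∀ v, P.output (exec P.trans (initConfig P f) (fun s => e s ω) t v) = majOf f} = 1

/-- The expected stabilization time on input `f`. -/
noncomputable def expStab [Fintype V] [DecidableEq V] (G : SimpleGraph V) (P : Protocol Λ)
    {Ω : Type*} [MeasurableSpace Ω] (μ : Measure Ω) (e : ℕ → Ω → V × V) (f : V → Bool) :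
    ℝ≥0∞ :=
  ∫⁻ ω, stabTime G P.trans P.output (initConfig P f) (fun s => e s ω) ∂μ

/-- States of the two-species annihilation dynamics. -/
inductive ABC : Type
  | A | B | C
deriving DecidableEq

/-- The annihilation rule: `A` and `B` annihilate into `C`; otherwise states are swapped. -/
def annRule : ABC × ABC → ABC × ABC
  | (ABC.A, ABC.B) => (ABC.C, ABC.C)
  | (ABC.B, ABC.A) => (ABC.C, ABC.C)
  | (x, y) => (y, x)

/-- The number of nodes in a given annihilation state. -/
def cntABC [Fintype V] (x : V → ABC) (a : ABC) : ℕ :=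
  (Finset.univ.filter fun v => x v = a).card

/-- The bias of an annihilation configuration. -/
noncomputable def annBias [Fintype V] (x : V → ABC) : ℝ :=
  ((cntABC x ABC.A : ℝ) - (cntABC x ABC.B : ℝ)) / (Fintype.card V : ℝ)

/-- The extinction time of the annihilation dynamics: the first time at which
no node is in state `B`. -/
noncomputable def extTime [Fintype V] [DecidableEq V] (x0 : V → ABC) (σ : ℕ → V × V) :
    ℝ≥0∞ :=
  sInf {c : ℝ≥0∞ | ∃ t : ℕ, c = (t : ℝ≥0∞) ∧ ∀ v, exec annRule x0 σ t v ≠ ABC.B}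

/-- The `ε`-clearing time of the annihilation dynamics. -/
noncomputable def clrTime [Fintype V] [DecidableEq V] (ε : ℝ) (x0 : V → ABC)
    (σ : ℕ → V × V) : ℝ≥0∞ :=
  sInf {c : ℝ≥0∞ | ∃ t : ℕ, c = (t : ℝ≥0∞) ∧
    ((∀ v, exec annRule x0 σ t v ≠ ABC.B) ∨
      (1 - ε) * (Fintype.card V : ℝ) ≤ (cntABC (exec annRule x0 σ t) ABC.C : ℝ))}

/-- The `±1/0` encoding of annihilation states. -/
def zOf : ABC → ℤ
  | ABC.A => 1
  | ABC.B => -1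
  | ABC.C => 0

/-- The influencer sets of the broadcast process. -/
def influencers [DecidableEq V] (σ : ℕ → V × V) : ℕ → V → Set V
  | 0, v => {v}
  | t + 1, v =>
    if v = (σ t).1 then influencers σ t v ∪ influencers σ t (σ t).2
    else if v = (σ t).2 then influencers σ t v ∪ influencers σ t (σ t).1
    else influencers σ t v

/-- The first time `v` is influenced by `u`. -/
noncomputable def hearTime [DecidableEq V] (σ : ℕ → V × V) (u v : V) : ℝ≥0∞ :=
  sInf {c : ℝ≥0∞ | ∃ t : ℕ, c = (t : ℝ≥0∞) ∧ u ∈ influencers σ t v}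

/-- The broadcast time from a node `u`. -/
noncomputable def bcastTime [Fintype V] [DecidableEq V] (σ : ℕ → V × V) (u : V) : ℝ≥0∞ :=
  ⨆ v, hearTime σ u v

/-- The broadcast time from a set `A` of nodes. -/
noncomputable def bcastTimeSet [Fintype V] [DecidableEq V] (σ : ℕ → V × V) (A : Set V) :
    ℝ≥0∞ :=
  ⨆ v, ⨅ u ∈ A, hearTime σ u v

/-- `Y` is a geometric random variable with parameter `p`, taking values in `{1,2,…}`. -/
def IsGeom {Ω : Type*} [MeasurableSpace Ω] (μ : Measure Ω) (Y : Ω → ℕ) (p : ℝ) : Prop :=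
  μ {ω | Y ω = 0} = 0 ∧
    ∀ k : ℕ, μ {ω | Y ω = k + 1} = ENNReal.ofReal ((1 - p) ^ k * p)

/-- The generator `Q = P − I` of the population random walk. -/
noncomputable def popQ [Fintype V] [DecidableEq V] (G : SimpleGraph V) [DecidableRel G.Adj] :
    Matrix V V ℝ :=
  popMat G - 1

/-- The principal submatrix of `Q` on a set `U` of vertices. -/
noncomputable def subQ [Fintype V] [DecidableEq V] (G : SimpleGraph V) [DecidableRel G.Adj]
    (U : Finset V) : Matrix {v // v ∈ U} {v // v ∈ U} ℝ :=
  (popQ G).submatrix (fun i => (i : V)) (fun i => (i : V))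

/-- The largest eigenvalue of a symmetric matrix, via the Rayleigh quotient. -/
noncomputable def maxEig {ι : Type*} [Fintype ι] (M : Matrix ι ι ℝ) : ℝ :=
  sSup {r : ℝ | ∃ x : ι → ℝ, x ≠ 0 ∧ r = (∑ i, ∑ j, x i * M i j * x j) / (∑ i, (x i) ^ 2)}

/-- The matrix `R_S`. -/
noncomputable def RS [Fintype V] [DecidableEq V] (G : SimpleGraph V) [DecidableRel G.Adj]
    (S : Finset V) : Matrix V V ℝ :=
  Matrix.of fun u v =>
    if u ∈ S then (if u = v then maxEig (subQ G Sᶜ) else 0)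
    else if v ∈ S then 0
    else popQ G u v

end PP



/-- The `(k,k)`-lollipop graph on `2k` vertices: a complete graph on the vertices
`0, …, k−1` and a path on the vertices `k, …, 2k−1`, connected by a bridge edge
between `k−1` and `k`. -/
def lollipop (k : ℕ) : SimpleGraph (Fin (2 * k)) :=
  SimpleGraph.fromRel (fun a b =>
    (a.val < k ∧ b.val < k) ∨ (k - 1 ≤ a.val ∧ b.val = a.val + 1))


/-! ### Auxiliary material for the proof -/

namespace PPAux

open PP

variable {V : Type*} [DecidableEq V] {Λ : Type*}

/-- One-step relation of a protocol on a graph. -/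
def Step (G : SimpleGraph V) (Ξ : Λ × Λ → Λ × Λ) (a b : V → Λ) : Prop :=
  ∃ p : V × V, G.Adj p.1 p.2 ∧ b = applyStep Ξ a p

lemma exec_congr (Ξ : Λ × Λ → Λ × Λ) (x0 : V → Λ) (σ σ' : ℕ → V × V) :
    ∀ t : ℕ, (∀ s, s < t → σ s = σ' s) → exec Ξ x0 σ t = exec Ξ x0 σ' t := by
  intro t
  induction t with
  | zero => intro _; rfl
  | succ t ih =>
    intro h
    have h1 : exec Ξ x0 σ t = exec Ξ x0 σ' t := ih fun s hs => h s (Nat.lt_succ_of_lt hs)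
    show applyStep Ξ (exec Ξ x0 σ t) (σ t) = applyStep Ξ (exec Ξ x0 σ' t) (σ' t)
    rw [h1, h t (Nat.lt_succ_self t)]

lemma reach_exec (G : SimpleGraph V) (Ξ : Λ × Λ → Λ × Λ) (x0 : V → Λ) (σ : ℕ → V × V)
    {s t : ℕ} (hst : s ≤ t) (hadj : ∀ i, i < t → G.Adj (σ i).1 (σ i).2) :
    Relation.ReflTransGen (Step G Ξ) (exec Ξ x0 σ s) (exec Ξ x0 σ t) := by
  induction t with
  | zero =>
    have : s = 0 := Nat.le_zero.mp hst
    subst this; exact Relation.ReflTransGen.refl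
  | succ t ih =>
    rcases Nat.lt_or_ge s (t + 1) with h | h
    · have h1 : s ≤ t := Nat.lt_succ_iff.mp h
      have h2 := ih h1 (fun i hi => hadj i (Nat.lt_succ_of_lt hi))
      exact h2.tail ⟨σ t, hadj t (Nat.lt_succ_self t), rfl⟩
    · have : s = t + 1 := le_antisymm hst h
      subst this; exact Relation.ReflTransGen.refl

lemma stable_outputs (G : SimpleGraph V) (Ξ : Λ × Λ → Λ × Λ) (out : Λ → Bool)
    {x y : V → Λ} (hx : IsStable G Ξ out x) (hxy : Relation.ReflTransGen (Step G Ξ) x y) :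
    ∀ v, out (y v) = out (x v) :=
  hx y hxy

lemma indist (Ξ : Λ × Λ → Λ × Λ) (x0 x0' : V → Λ) (σ : ℕ → V × V) :
    ∀ t (v : V), (∀ u, u ∈ influencers σ t v → x0 u = x0' u) →
      exec Ξ x0 σ t v = exec Ξ x0' σ t v := by
  intro t
  induction t with
  | zero =>
    intro v h
    exact h v rfl
  | succ t ih =>
    intro v h
    show applyStep Ξ (exec Ξ x0 σ t) (σ t) v = applyStep Ξ (exec Ξ x0' σ t) (σ t) v
    unfold applyStep
    by_cases h1 : v = (σ t).1
    · have hin : influencers σ (t+1) v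
          = influencers σ t v ∪ influencers σ t (σ t).2 := by
        simp only [influencers, if_pos h1]
      have e1 : exec Ξ x0 σ t (σ t).1 = exec Ξ x0' σ t (σ t).1 := by
        apply ih
        intro u hu
        exact h u (by rw [hin]; exact Or.inl (h1 ▸ hu))
      have e2 : exec Ξ x0 σ t (σ t).2 = exec Ξ x0' σ t (σ t).2 := by
        apply ih
        intro u hu
        exact h u (by rw [hin]; exact Or.inr hu)
      simp [h1, e1, e2]
    · by_cases h2 : v = (σ t).2
      · have hin : influencers σ (t+1) v
            = influencers σ t v ∪ influencers σ t (σ t).1 := by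
          simp only [influencers, if_neg h1, if_pos h2]
        have e1 : exec Ξ x0 σ t (σ t).1 = exec Ξ x0' σ t (σ t).1 := by
          apply ih; intro u hu; exact h u (by rw [hin]; exact Or.inr hu)
        have e2 : exec Ξ x0 σ t (σ t).2 = exec Ξ x0' σ t (σ t).2 := by
          apply ih; intro u hu; exact h u (by rw [hin]; exact Or.inl (h2 ▸ hu))
        simp [h1, h2, e1, e2]
      · have hin : influencers σ (t+1) v = influencers σ t v := by
          simp [influencers, h1, h2]
        have e0 : exec Ξ x0 σ t v = exec Ξ x0' σ t v := by
          apply ih; intro u hu; exact h u (by rw [hin]; exact hu)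
        simp [h1, h2, e0]

end PPAux

section Lollipop

open PP

lemma lol_adj {k : ℕ} (a b : Fin (2*k)) :
    (lollipop k).Adj a b ↔ a ≠ b ∧
      ((a.val < k ∧ b.val < k) ∨ (k - 1 ≤ a.val ∧ b.val = a.val + 1) ∨
        (b.val < k ∧ a.val < k) ∨ (k - 1 ≤ b.val ∧ a.val = b.val + 1)) := by
  rw [lollipop, SimpleGraph.fromRel_adj]
  tauto

/-- Number of chain edges still needed for information from the path end to reach `v`. -/
def lolD (k : ℕ) (v : Fin (2*k)) : ℕ :=
  if v.val ≤ k - 1 then k - 1 else 2*k - 2 - v.val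

/-- The chain edges: `lolQ k i` is the ordered pair `(2k-3-i, 2k-2-i)`. -/
def lolQ (k : ℕ) (hk : 2 ≤ k) (i : ℕ) : Fin (2*k) × Fin (2*k) :=
  (⟨2*k - 3 - i, by omega⟩, ⟨2*k - 2 - i, by omega⟩)

lemma lolQ_adj {k : ℕ} (hk : 2 ≤ k) {i : ℕ} (hi : i < k - 1) :
    (lollipop k).Adj (lolQ k hk i).1 (lolQ k hk i).2 := by
  rw [lol_adj]
  refine ⟨?_, Or.inr (Or.inl ?_)⟩
  · simp only [lolQ, ne_eq, Fin.mk.injEq]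
    omega
  · simp only [lolQ]
    omega

lemma lolD_step {k : ℕ} (hk : 2 ≤ k) {v w : Fin (2*k)} (h : (lollipop k).Adj v w) :
    lolD k v ≤ lolD k w + 1 ∧ (lolD k w + 1 ≤ lolD k v → (v, w) = lolQ k hk (lolD k w)) := by
  rw [lol_adj] at h
  obtain ⟨hne, hc⟩ := h
  have hne' : v.val ≠ w.val := fun hh => hne (Fin.ext hh)
  have hv := v.isLt
  have hw := w.isLt
  constructor
  · unfold lolD
    split_ifs <;> omega
  · intro hge
    have hvw : v.val = 2*k - 3 - lolD k w ∧ w.val = 2*k - 2 - lolD k w := by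
      unfold lolD at hge ⊢
      split_ifs at hge ⊢ <;> omega
    simp only [lolQ, Prod.ext_iff, Fin.ext_iff]
    exact ⟨hvw.1, hvw.2⟩

/-- The chain property: a strictly increasing sequence of times firing the chain edges
in order from the far end of the path towards the clique. -/
def ChainTo {k : ℕ} (hk : 2 ≤ k) (σ : ℕ → Fin (2*k) × Fin (2*k)) (d t : ℕ) : Prop :=
  ∃ ts : Fin d → ℕ, StrictMono ts ∧ (∀ i, ts i < t) ∧
    ∀ i : Fin d, σ (ts i) = lolQ k hk i.val ∨ σ (ts i) = (lolQ k hk i.val).swap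

lemma chainTo_mono {k : ℕ} (hk : 2 ≤ k) {σ : ℕ → Fin (2*k) × Fin (2*k)} {d t t' : ℕ}
    (htt : t ≤ t') (h : ChainTo hk σ d t) : ChainTo hk σ d t' := by
  obtain ⟨ts, h1, h2, h3⟩ := h
  exact ⟨ts, h1, fun i => lt_of_lt_of_le (h2 i) htt, h3⟩

lemma chainTo_extend {k : ℕ} (hk : 2 ≤ k) {σ : ℕ → Fin (2*k) × Fin (2*k)} {t : ℕ}
    {v w : Fin (2*k)} (hσ : σ t = (v, w) ∨ σ t = (w, v))
    (hvw : (lollipop k).Adj v w) (H : ChainTo hk σ (lolD k w) t) :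
    ChainTo hk σ (lolD k v) (t+1) := by
  obtain ⟨hle, heq⟩ := lolD_step hk hvw
  rcases Nat.lt_or_ge (lolD k v) (lolD k w + 1) with hlt | hge
  · -- lolD v ≤ lolD w : truncate
    have hle' : lolD k v ≤ lolD k w := by omega
    obtain ⟨ts, h1, h2, h3⟩ := H
    refine ⟨fun i => ts (Fin.castLE hle' i), fun i j hij => h1 (by simpa using hij),
      fun i => lt_of_lt_of_le (h2 _) (Nat.le_succ t), fun i => ?_⟩
    exact h3 (Fin.castLE hle' i)
  · -- lolD v = lolD w + 1 : append the firing at time t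
    have heq2 : (v, w) = lolQ k hk (lolD k w) := heq hge
    have hd : lolD k v = lolD k w + 1 := by omega
    obtain ⟨ts, h1, h2, h3⟩ := H
    refine ⟨fun i => if hi : i.val < lolD k w then ts ⟨i.val, hi⟩ else t, ?_, ?_, ?_⟩
    · intro i j hij
      by_cases hi : i.val < lolD k w <;> by_cases hj : j.val < lolD k w <;>
        simp only [dif_pos, dif_neg, hi, hj, dite_true, dite_false]
      · exact h1 (by simpa using hij)
      · exact h2 _
      · exact absurd (lt_trans (Fin.lt_iff_val_lt_val.mp hij)
          (by omega : j.val < lolD k w + 1)) (by omega)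
      · exact absurd (Fin.lt_iff_val_lt_val.mp hij) (by omega)
    · intro i
      by_cases hi : i.val < lolD k w <;>
        simp only [dif_pos, dif_neg, hi, dite_true, dite_false]
      · exact lt_of_lt_of_le (h2 _) (Nat.le_succ t)
      · exact Nat.lt_succ_self t
    · intro i
      by_cases hi : i.val < lolD k w <;>
        simp only [dif_pos, dif_neg, hi, dite_true, dite_false]
      · exact h3 ⟨i.val, hi⟩
      · have hival : i.val = lolD k w := by have := i.isLt; omega
        rw [hival]
        rcases hσ with hh | hh
        · exact Or.inl (by rw [hh, heq2])
        · exact Or.inr (by rw [hh, ← heq2, Prod.swap])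

lemma chain_of_influence {k : ℕ} (hk : 2 ≤ k) (σ : ℕ → Fin (2*k) × Fin (2*k)) :
    ∀ t : ℕ, (∀ s, s < t → (lollipop k).Adj (σ s).1 (σ s).2) →
      ∀ v u : Fin (2*k), u ∈ PP.influencers σ t v → 2*k - 2 ≤ u.val →
        ChainTo hk σ (lolD k v) t := by
  intro t
  induction t with
  | zero =>
    intro _ v u hu hD
    have hv : u = v := hu
    have hd : lolD k v = 0 := by
      subst hv
      unfold lolD
      split_ifs <;> omega
    rw [hd]
    exact ⟨fun i => 0, fun i j _ => isEmptyElim i, fun i => isEmptyElim i, fun i => isEmptyElim i⟩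
  | succ t ih =>
    intro hadj v u hu hD
    have hadj' : ∀ s, s < t → (lollipop k).Adj (σ s).1 (σ s).2 :=
      fun s hs => hadj s (Nat.lt_succ_of_lt hs)
    have hadjt := hadj t (Nat.lt_succ_self t)
    by_cases h1 : v = (σ t).1
    · have hin : PP.influencers σ (t+1) v
          = PP.influencers σ t v ∪ PP.influencers σ t (σ t).2 := by
        simp only [PP.influencers, if_pos h1]
      rw [hin] at hu
      rcases hu with hu | hu
      · exact chainTo_mono hk (Nat.le_succ t) (ih hadj' v u hu hD)
      · have H := ih hadj' (σ t).2 u hu hD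
        have hvw : (lollipop k).Adj v ((σ t).2) := h1 ▸ hadjt
        exact chainTo_extend hk (Or.inl (by rw [h1])) hvw H
    · by_cases h2 : v = (σ t).2
      · have hin : PP.influencers σ (t+1) v
            = PP.influencers σ t v ∪ PP.influencers σ t (σ t).1 := by
          simp only [PP.influencers, if_neg h1, if_pos h2]
        rw [hin] at hu
        rcases hu with hu | hu
        · exact chainTo_mono hk (Nat.le_succ t) (ih hadj' v u hu hD)
        · have H := ih hadj' (σ t).1 u hu hD
          have hvw : (lollipop k).Adj v ((σ t).1) := ((h2 ▸ hadjt : (lollipop k).Adj (σ t).1 v)).symm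
          exact chainTo_extend hk (Or.inr (by rw [h2])) hvw H
      · have hin : PP.influencers σ (t+1) v = PP.influencers σ t v := by
          simp only [PP.influencers, if_neg h1, if_neg h2]
        rw [hin] at hu
        exact chainTo_mono hk (Nat.le_succ t) (ih hadj' v u hu hD)

end Lollipop

section Inputs

open PP

lemma card_val_lt {n : ℕ} (b : Fin n) :
    (Finset.univ.filter fun v : Fin n => v.val < b.val).card = b.val := by
  have h : (Finset.univ.filter fun v : Fin n => v.val < b.val) = Finset.Iio b := by
    ext v
    simp only [Finset.mem_filter, Finset.mem_univ, true_and, Finset.mem_Iio, Fin.lt_def]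
  rw [h, Fin.card_Iio]

lemma card_val_lt' {n c : ℕ} (h : c < n) :
    (Finset.univ.filter fun v : Fin n => v.val < c).card = c :=
  card_val_lt (⟨c, h⟩ : Fin n)

lemma card_val_ge {n c : ℕ} (h : c < n) :
    (Finset.univ.filter fun v : Fin n => c ≤ v.val).card = n - c := by
  have h2 := Finset.card_filter_add_card_filter_not
    (s := (Finset.univ : Finset (Fin n))) (p := fun v : Fin n => v.val < c)
  simp only [not_lt] at h2
  have h3 := card_val_lt' h
  have h4 : (Finset.univ : Finset (Fin n)).card = n := by simp
  omega

/-- First input: `true` on the `k-1` clique vertices `0,…,k-2`. -/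
def fA (k : ℕ) : Fin (2*k) → Bool := fun v => decide (v.val < k - 1)

/-- Second input: additionally `true` on the two far path vertices `2k-2`, `2k-1`. -/
def fB (k : ℕ) : Fin (2*k) → Bool := fun v => decide (v.val < k - 1 ∨ 2*k - 2 ≤ v.val)

lemma fAB_agree {k : ℕ} {v : Fin (2*k)} (h : v.val < 2*k - 2) : fA k v = fB k v := by
  simp only [fA, fB, decide_eq_decide]
  omega

lemma cnt_fA_true {k : ℕ} (hk : 2 ≤ k) : cnt (fA k) true = k - 1 := by
  unfold cnt fA
  simp only [decide_eq_true_eq]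
  exact card_val_lt' (by omega)

lemma cnt_fA_false {k : ℕ} (hk : 2 ≤ k) : cnt (fA k) false = k + 1 := by
  have h1 := cnt_fA_true hk
  have h2 : cnt (fA k) false + cnt (fA k) true = 2*k := by
    unfold cnt
    have h3 := Finset.card_filter_add_card_filter_not
      (s := (Finset.univ : Finset (Fin (2*k)))) (p := fun v => fA k v = false)
    simp only [Finset.card_univ, Fintype.card_fin] at h3
    have h4 : (Finset.univ.filter fun v : Fin (2*k) => ¬ fA k v = false)
        = (Finset.univ.filter fun v : Fin (2*k) => fA k v = true) := by
      apply Finset.filter_congr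
      intro v _
      simp
    rw [h4] at h3
    exact h3
  omega

lemma cnt_fB_true {k : ℕ} (hk : 2 ≤ k) : cnt (fB k) true = k + 1 := by
  unfold cnt fB
  simp only [decide_eq_true_eq]
  rw [Finset.filter_or]
  rw [Finset.card_union_of_disjoint]
  · rw [card_val_lt' (by omega : k - 1 < 2*k), card_val_ge (by omega : 2*k - 2 < 2*k)]
    omega
  · rw [Finset.disjoint_filter]
    intro v _ hv
    omega

lemma cnt_fB_false {k : ℕ} (hk : 2 ≤ k) : cnt (fB k) false = k - 1 := by
  have h1 := cnt_fB_true hk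
  have h2 : cnt (fB k) false + cnt (fB k) true = 2*k := by
    unfold cnt
    have h3 := Finset.card_filter_add_card_filter_not
      (s := (Finset.univ : Finset (Fin (2*k)))) (p := fun v => fB k v = false)
    simp only [Finset.card_univ, Fintype.card_fin] at h3
    have h4 : (Finset.univ.filter fun v : Fin (2*k) => ¬ fB k v = false)
        = (Finset.univ.filter fun v : Fin (2*k) => fB k v = true) := by
      apply Finset.filter_congr
      intro v _
      simp
    rw [h4] at h3
    exact h3
  omega

lemma bias_fA_pos {k : ℕ} (hk : 2 ≤ k) : 0 < bias (fA k) := by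
  unfold bias
  rw [cnt_fA_true hk, cnt_fA_false hk]
  have h1 : ((k + 1 : ℕ) : ℝ) - ((k - 1 : ℕ) : ℝ) = 2 := by
    rw [Nat.cast_sub (by omega)]
    push_cast
    ring
  rw [h1]
  have h2 : (0:ℝ) < (Fintype.card (Fin (2*k)) : ℝ) := by
    simp only [Fintype.card_fin]
    positivity
  positivity

lemma bias_fB_pos {k : ℕ} (hk : 2 ≤ k) : 0 < bias (fB k) := by
  unfold bias
  rw [cnt_fB_true hk, cnt_fB_false hk]
  have h1 : ((k - 1 : ℕ) : ℝ) - ((k + 1 : ℕ) : ℝ) = -2 := by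
    rw [Nat.cast_sub (by omega)]
    push_cast
    ring
  rw [h1]
  have h2 : (0:ℝ) < (Fintype.card (Fin (2*k)) : ℝ) := by
    simp only [Fintype.card_fin]
    positivity
  rw [abs_neg]
  positivity

lemma majOf_fA {k : ℕ} (hk : 2 ≤ k) : majOf (fA k) = false := by
  unfold majOf
  rw [cnt_fA_true hk, cnt_fA_false hk]
  simp only [decide_eq_false_iff_not]
  omega

lemma majOf_fB {k : ℕ} (hk : 2 ≤ k) : majOf (fB k) = true := by
  unfold majOf
  rw [cnt_fB_true hk, cnt_fB_false hk]
  simp only [decide_eq_true_eq]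
  omega

end Inputs

section Meas

open PP

variable {V : Type*} [Fintype V] [DecidableEq V] {Ω : Type*} [MeasurableSpace Ω]

/-- The per-step distribution of the scheduler. -/
noncomputable def mass (G : SimpleGraph V) (p : V × V) : ℝ≥0∞ :=
  letI := Classical.dec (G.Adj p.1 p.2)
  if G.Adj p.1 p.2 then ENNReal.ofReal (1 / (2 * (numEdges G : ℝ))) else 0

lemma mass_eq {G : SimpleGraph V} {μ : Measure Ω} {e : ℕ → Ω → V × V}
    (hs : IsUniformSched G μ e) (t : ℕ) (p : V × V) :
    μ (e t ⁻¹' {p}) = mass G p := by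
  classical
  have hset : e t ⁻¹' {p} = {ω | e t ω = p} := rfl
  unfold mass
  by_cases h : G.Adj p.1 p.2
  · rw [hset, hs.2.1 t p h, if_pos h]
  · rw [hset, hs.2.2 t p h, if_neg h]

lemma card_adj_pairs (G : SimpleGraph V) [DecidableRel G.Adj] :
    (Finset.univ.filter fun p : V × V => G.Adj p.1 p.2).card = 2 * numEdges G := by
  have h1 : Fintype.card G.Dart = (Finset.univ.filter fun p : V × V => G.Adj p.1 p.2).card := by
    rw [← Fintype.card_subtype]
    exact Fintype.card_congr
      ⟨fun d => ⟨d.toProd, d.adj⟩, fun q => ⟨q.1, q.2⟩,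
        fun d => by cases d; rfl, fun q => by cases q; rfl⟩
  have h2 := SimpleGraph.dart_card_eq_twice_card_edges G
  have h3 : numEdges G = G.edgeFinset.card := by
    rw [numEdges, Nat.card_eq_fintype_card, SimpleGraph.edgeFinset_card]
  omega

lemma mass_ite (G : SimpleGraph V) [DecidableRel G.Adj] (p : V × V) :
    mass G p = if G.Adj p.1 p.2 then ENNReal.ofReal (1 / (2 * (numEdges G : ℝ))) else 0 := by
  by_cases h : G.Adj p.1 p.2 <;> simp [mass, h]

lemma sum_mass {G : SimpleGraph V} (hm : 0 < numEdges G) :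
    ∑ p : V × V, mass G p = 1 := by
  classical
  have h1 : ∑ p : V × V, mass G p
      = ∑ _p ∈ Finset.univ.filter (fun p : V × V => G.Adj p.1 p.2),
          ENNReal.ofReal (1 / (2 * (numEdges G : ℝ))) := by
    rw [Finset.sum_filter]
    exact Finset.sum_congr rfl fun p _ => mass_ite G p
  rw [h1, Finset.sum_const, card_adj_pairs G, nsmul_eq_mul]
  rw [show ((2 * numEdges G : ℕ) : ℝ≥0∞) = ENNReal.ofReal ((2 * numEdges G : ℕ) : ℝ) by
    rw [ENNReal.ofReal_natCast]]
  rw [← ENNReal.ofReal_mul (by positivity)]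
  rw [show ((2 * numEdges G : ℕ) : ℝ) * (1 / (2 * (numEdges G : ℝ))) = 1 by
    have hm' : (0:ℝ) < (numEdges G : ℝ) := by exact_mod_cast hm
    push_cast
    field_simp]
  exact ENNReal.ofReal_one

lemma meas_iInter_fin {G : SimpleGraph V} {μ : Measure Ω} {e : ℕ → Ω → V × V}
    (hs : IsUniformSched G μ e) {r : ℕ} (τ : Fin r → ℕ) (hτ : Function.Injective τ)
    (c : Fin r → V × V) :
    μ (⋂ i : Fin r, e (τ i) ⁻¹' {c i}) = ∏ i : Fin r, mass G (c i) := by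
  classical
  set s : Finset ℕ := Finset.univ.image τ with hs_def
  set g : ℕ → Set (V × V) := fun t =>
    if h : ∃ i, τ i = t then {c h.choose} else Set.univ with hg_def
  have hg : ∀ i, g (τ i) = {c i} := by
    intro i
    have hex : ∃ j, τ j = τ i := ⟨i, rfl⟩
    have : hex.choose = i := hτ hex.choose_spec
    simp only [hg_def, dif_pos hex, this]
  have h1 : (⋂ i : Fin r, e (τ i) ⁻¹' {c i}) = ⋂ t ∈ s, e t ⁻¹' (g t) := by
    ext ω
    simp only [Set.mem_iInter, Set.mem_preimage, hs_def, Finset.mem_image,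
      Finset.mem_univ, true_and]
    constructor
    · rintro h t ⟨i, rfl⟩
      rw [hg i]
      exact h i
    · intro h i
      have := h (τ i) ⟨i, rfl⟩
      rwa [hg i] at this
  rw [h1, hs.1.measure_inter_preimage_eq_mul s (sets := g)
    (fun i _ => MeasurableSpace.measurableSet_top)]
  rw [Finset.prod_image (fun i _ j _ h => hτ h)]
  apply Finset.prod_congr rfl
  intro i _
  rw [hg i, mass_eq hs]

lemma meas_atom {G : SimpleGraph V} {μ : Measure Ω} {e : ℕ → Ω → V × V}
    (hs : IsUniformSched G μ e) {w : ℕ} (b : Fin w → V × V) :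
    μ {ω | ∀ s : Fin w, e s ω = b s} = ∏ s : Fin w, mass G (b s) := by
  have h1 : {ω | ∀ s : Fin w, e s ω = b s} = ⋂ s : Fin w, e s ⁻¹' {b s} := by
    ext ω
    simp [Set.mem_iInter]
  rw [h1]
  exact meas_iInter_fin hs (fun s : Fin w => (s : ℕ)) (fun i j h => Fin.ext h) b

lemma sum_weight_univ {G : SimpleGraph V} (hm : 0 < numEdges G) (w : ℕ) :
    ∑ b : Fin w → V × V, ∏ s : Fin w, mass G (b s) = 1 := by
  classical
  have := Finset.prod_univ_sum (ι := Fin w) (fun _ => (Finset.univ : Finset (V × V)))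
    (fun _ p => mass G p)
  rw [Fintype.piFinset_univ] at this
  rw [← this]
  rw [Finset.prod_congr rfl (fun s _ => sum_mass hm)]
  simp

lemma meas_cyl {G : SimpleGraph V} {μ : Measure Ω} [IsProbabilityMeasure μ]
    {e : ℕ → Ω → V × V} (hs : IsUniformSched G μ e) (hm : 0 < numEdges G)
    {w : ℕ} (B : Finset (Fin w → V × V)) :
    μ {ω | (fun s : Fin w => e s ω) ∈ B} = ∑ b ∈ B, ∏ s : Fin w, mass G (b s) := by
  classical
  have key : ∀ C : Finset (Fin w → V × V),
      μ {ω | (fun s : Fin w => e s ω) ∈ C} ≤ ∑ b ∈ C, ∏ s : Fin w, mass G (b s) := by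
    intro C
    have h1 : {ω | (fun s : Fin w => e s ω) ∈ C}
        = ⋃ b ∈ C, {ω | ∀ s : Fin w, e s ω = b s} := by
      ext ω
      simp only [Set.mem_setOf_eq, Set.mem_iUnion]
      constructor
      · intro h
        exact ⟨_, h, fun s => rfl⟩
      · rintro ⟨b, hb, h⟩
        have : (fun s : Fin w => e s ω) = b := funext h
        rwa [this]
    rw [h1]
    refine (measure_biUnion_finset_le C _).trans ?_
    exact Finset.sum_le_sum fun b _ => le_of_eq (meas_atom hs b)
  refine le_antisymm (key B) ?_
  have h2 : (1:ℝ≥0∞) ≤ μ {ω | (fun s : Fin w => e s ω) ∈ B}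
      + ∑ b ∈ Bᶜ, ∏ s : Fin w, mass G (b s) := by
    have hu : (Set.univ : Set Ω) = {ω | (fun s : Fin w => e s ω) ∈ B}
        ∪ {ω | (fun s : Fin w => e s ω) ∈ Bᶜ} := by
      ext ω
      simp only [Set.mem_univ, Set.mem_union, Set.mem_setOf_eq, Finset.mem_compl, true_iff]
      tauto
    calc (1:ℝ≥0∞) = μ Set.univ := (measure_univ).symm
      _ ≤ μ {ω | (fun s : Fin w => e s ω) ∈ B} + μ {ω | (fun s : Fin w => e s ω) ∈ Bᶜ} := by
          rw [hu]; exact measure_union_le _ _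
      _ ≤ _ := by gcongr; exact key Bᶜ
  have h3 : ∑ b ∈ B, ∏ s : Fin w, mass G (b s) + ∑ b ∈ Bᶜ, ∏ s : Fin w, mass G (b s) = 1 := by
    rw [Finset.sum_add_sum_compl]
    exact sum_weight_univ hm w
  have h4 : ∑ b ∈ Bᶜ, ∏ s : Fin w, mass G (b s) ≠ ⊤ := by
    intro htop
    rw [htop] at h3
    simp at h3
  have h5 := h2
  rw [← h3] at h5
  exact (ENNReal.add_le_add_iff_right h4).mp h5

end Meas

section Core

open PP PPAux

lemma stabTime_ge {V : Type*} [DecidableEq V] {Λ : Type*} (G : SimpleGraph V)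
    (Ξ : Λ × Λ → Λ × Λ) (out : Λ → Bool) (x0 : V → Λ) (σ : ℕ → V × V) {a : ℕ}
    (h : ∀ t, t < a → ¬ IsStable G Ξ out (exec Ξ x0 σ t)) :
    (a : ℝ≥0∞) ≤ stabTime G Ξ out x0 σ := by
  apply le_sInf
  rintro c ⟨t, rfl, hst⟩
  have : a ≤ t := not_lt.mp fun hlt => h t hlt hst
  exact_mod_cast this

lemma numEdges_lollipop_ge {k : ℕ} (hk : 2 ≤ k) : 2*k - 1 ≤ numEdges (lollipop k) := by
  have hadj : ∀ i : ℕ, ∀ hi : i < 2*k - 1,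
      (lollipop k).Adj ⟨i, by omega⟩ ⟨i+1, by omega⟩ := by
    intro i hi
    rw [lol_adj]
    constructor
    · simp only [ne_eq, Fin.mk.injEq]
      omega
    · simp only [Fin.val_mk]
      rcases Nat.lt_or_ge i (k-1) with h | h
      · exact Or.inl ⟨by omega, by omega⟩
      · exact Or.inr (Or.inl ⟨by omega, by simp⟩)
  set F : Fin (2*k - 1) → (lollipop k).edgeSet := fun i =>
    ⟨s(⟨i.val, by have := i.isLt; omega⟩, ⟨i.val+1, by have := i.isLt; omega⟩),
      hadj i.val i.isLt⟩
  have hinj : Function.Injective F := by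
    intro i j hij
    have h1 : (s((⟨i.val, by have := i.isLt; omega⟩ : Fin (2*k)),
          (⟨i.val+1, by have := i.isLt; omega⟩ : Fin (2*k))) : Sym2 (Fin (2*k)))
        = s((⟨j.val, by have := j.isLt; omega⟩ : Fin (2*k)),
          (⟨j.val+1, by have := j.isLt; omega⟩ : Fin (2*k))) := congrArg Subtype.val hij
    rw [Sym2.eq_iff] at h1
    rcases h1 with ⟨h2, _⟩ | ⟨h2, h3⟩
    · exact Fin.ext (by simpa [Fin.ext_iff] using h2)
    · have := congrArg Fin.val h2
      have := congrArg Fin.val h3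
      simp only [Fin.ext_iff] at *
      omega
  have := Nat.card_le_card_of_injective F hinj
  simpa [numEdges, Nat.card_eq_fintype_card] using this

/-- The deterministic core: if both executions stabilize before time `a`, both
eventually reach correct stable configurations, and the schedule is adjacent, then the
chain of path edges must have fired in order before time `a`. -/
lemma core_det {k : ℕ} (hk : 2 ≤ k) {Λ : Type*} (P : Protocol Λ)
    (σ : ℕ → Fin (2*k) × Fin (2*k)) {a jA jB : ℕ}
    (hadj : ∀ s, s < a + jA + jB + 1 → (lollipop k).Adj (σ s).1 (σ s).2)
    (hA : ∃ t, t < a ∧ IsStable (lollipop k) P.trans P.output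
      (exec P.trans (initConfig P (fA k)) σ t))
    (hB : ∃ t, t < a ∧ IsStable (lollipop k) P.trans P.output
      (exec P.trans (initConfig P (fB k)) σ t))
    (hSA : ∃ s, s ≤ jA ∧ IsStable (lollipop k) P.trans P.output
        (exec P.trans (initConfig P (fA k)) σ s) ∧
      ∀ v, P.output (exec P.trans (initConfig P (fA k)) σ s v) = majOf (fA k))
    (hSB : ∃ s, s ≤ jB ∧ IsStable (lollipop k) P.trans P.output
        (exec P.trans (initConfig P (fB k)) σ s) ∧
      ∀ v, P.output (exec P.trans (initConfig P (fB k)) σ s v) = majOf (fB k)) :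
    ChainTo hk σ (k - 1) a := by
  set G := lollipop k
  set w := a + jA + jB + 1 with hw
  obtain ⟨uA, huA, hstA⟩ := hA
  obtain ⟨uB, huB, hstB⟩ := hB
  obtain ⟨sA, hsA, hsAst, hsAmaj⟩ := hSA
  obtain ⟨sB, hsB, hsBst, hsBmaj⟩ := hSB
  -- the outputs at any stable time equal the majority output
  have key : ∀ (f : Fin (2*k) → Bool) (u s_ : ℕ), u < a → s_ ≤ jA + jB →
      IsStable G P.trans P.output (exec P.trans (initConfig P f) σ u) →
      IsStable G P.trans P.output (exec P.trans (initConfig P f) σ s_) →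
      (∀ v, P.output (exec P.trans (initConfig P f) σ s_ v) = majOf f) →
      ∀ t, u ≤ t → t < a →
        ∀ v, P.output (exec P.trans (initConfig P f) σ t v) = majOf f := by
    intro f u s_ hu hs_ hstu hsts hmaj t hut hta v
    have hadj' : ∀ i, i < w → G.Adj (σ i).1 (σ i).2 := hadj
    have hout_u : ∀ v, P.output (exec P.trans (initConfig P f) σ u v) = majOf f := by
      rcases le_total u s_ with h | h
      · intro v'
        have hr := reach_exec G P.trans (initConfig P f) σ h
          (fun i hi => hadj' i (by omega))
        have := stable_outputs G P.trans P.output hstu hr v'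
        rw [← this, hmaj v']
      · intro v'
        have hr := reach_exec G P.trans (initConfig P f) σ h
          (fun i hi => hadj' i (by omega))
        have := stable_outputs G P.trans P.output hsts hr v'
        rw [this, hmaj v']
    have hr := reach_exec G P.trans (initConfig P f) σ hut
      (fun i hi => hadj' i (by omega))
    have := stable_outputs G P.trans P.output hstu hr v
    rw [this, hout_u v]
  set t0 := max uA uB with ht0
  have ht0a : t0 < a := by omega
  have houtA : ∀ v, P.output (exec P.trans (initConfig P (fA k)) σ t0 v) = majOf (fA k) :=
    key (fA k) uA sA huA (by omega) hstA hsAst hsAmaj t0 (le_max_left _ _) ht0a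
  have houtB : ∀ v, P.output (exec P.trans (initConfig P (fB k)) σ t0 v) = majOf (fB k) :=
    key (fB k) uB sB huB (by omega) hstB hsBst hsBmaj t0 (le_max_right _ _) ht0a
  set v0 : Fin (2*k) := ⟨0, by omega⟩ with hv0
  have hne : exec P.trans (initConfig P (fA k)) σ t0 v0
      ≠ exec P.trans (initConfig P (fB k)) σ t0 v0 := by
    intro heq
    have h1 := houtA v0
    have h2 := houtB v0
    rw [majOf_fA hk] at h1
    rw [majOf_fB hk] at h2
    rw [heq, h2] at h1
    simp at h1
  -- some far vertex influences v0
  have hinf : ∃ u : Fin (2*k), u ∈ PP.influencers σ t0 v0 ∧ 2*k - 2 ≤ u.val := by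
    by_contra hcon
    push_neg at hcon
    apply hne
    apply indist
    intro u hu
    have hlt : u.val < 2*k - 2 := by
      have := hcon u hu
      omega
    unfold initConfig
    rw [fAB_agree hlt]
  obtain ⟨u, hu, huval⟩ := hinf
  have hchain := chain_of_influence hk σ t0 (fun s hs => hadj s (by omega)) v0 u hu huval
  have hd : lolD k v0 = k - 1 := by
    unfold lolD
    rw [if_pos (by simp [hv0])]
  rw [hd] at hchain
  exact chainTo_mono hk (le_of_lt ht0a) hchain

end Core

section Arith

lemma pow_self_le_three_pow_mul_factorial (r : ℕ) :
    (r : ℝ) ^ r ≤ 3 ^ r * (r.factorial : ℝ) := by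
  induction r with
  | zero => norm_num
  | succ r ih =>
    rcases Nat.eq_zero_or_pos r with hr | hr
    · subst hr; norm_num
    · have hrR : (0:ℝ) < (r:ℝ) := by exact_mod_cast hr
      have h2 : (1 + 1/(r:ℝ)) ^ r ≤ 3 := by
        have h3 : (1:ℝ) + 1/(r:ℝ) ≤ Real.exp (1/(r:ℝ)) := by
          have := Real.add_one_le_exp (1/(r:ℝ))
          linarith
        have h4 : ((1:ℝ) + 1/(r:ℝ)) ^ r ≤ Real.exp (1/(r:ℝ)) ^ r :=
          pow_le_pow_left₀ (by positivity) h3 r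
        have h5 : Real.exp (1/(r:ℝ)) ^ r = Real.exp ((r:ℕ) * (1/(r:ℝ))) := by
          rw [Real.exp_nat_mul]
        have h6 : ((r:ℕ) : ℝ) * (1/(r:ℝ)) = 1 := by field_simp
        rw [h5, h6] at h4
        exact h4.trans (by linarith [Real.exp_one_lt_d9])
      have hstep : ((r:ℝ) + 1) ^ r ≤ 3 * (r:ℝ) ^ r := by
        have h1 : (r:ℝ) + 1 = (r:ℝ) * (1 + 1/(r:ℝ)) := by field_simp
        calc ((r:ℝ) + 1) ^ r = (r:ℝ) ^ r * (1 + 1/(r:ℝ)) ^ r := by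
              rw [h1, mul_pow]
          _ ≤ (r:ℝ) ^ r * 3 := mul_le_mul_of_nonneg_left h2 (by positivity)
          _ = 3 * (r:ℝ) ^ r := by ring
      calc ((r+1 : ℕ) : ℝ) ^ (r+1) = ((r:ℝ)+1) * ((r:ℝ)+1) ^ r := by
            push_cast; ring
        _ ≤ ((r:ℝ)+1) * (3 * (r:ℝ) ^ r) :=
            mul_le_mul_of_nonneg_left hstep (by positivity)
        _ ≤ ((r:ℝ)+1) * (3 * (3 ^ r * (r.factorial : ℝ))) :=
            mul_le_mul_of_nonneg_left (by linarith) (by positivity)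
        _ = 3 ^ (r+1) * (((r:ℝ)+1) * (r.factorial : ℝ)) := by ring
        _ = 3 ^ (r+1) * (((r+1).factorial : ℝ)) := by
            rw [Nat.factorial_succ]
            push_cast
            ring

lemma choose_le_bound (a r : ℕ) :
    (a.choose r : ℝ) * (r.factorial : ℝ) ≤ (a : ℝ) ^ r := by
  have h3 : a.choose r * r.factorial ≤ a ^ r :=
    calc a.choose r * r.factorial = r.factorial * a.choose r := Nat.mul_comm _ _
      _ = a.descFactorial r := (Nat.descFactorial_eq_factorial_mul_choose a r).symm
      _ ≤ a ^ r := Nat.descFactorial_le_pow a r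
  exact_mod_cast h3

/-- The key real inequality for the union bound. -/
lemma key_real {m a r : ℕ} (hr1 : 1 ≤ r) (hm : 2*r + 1 ≤ m)
    (ha : a = 1 + (m * r) / 32) :
    (a.choose r : ℝ) * 2 ^ r * (1 / (2 * (m:ℝ))) ^ r ≤ 1/3 := by
  have hm3 : 3 ≤ m := by omega
  have hmR : (0:ℝ) < (m:ℝ) := by exact_mod_cast (by omega : 0 < m)
  have hsimp : (a.choose r : ℝ) * 2 ^ r * (1 / (2 * (m:ℝ))) ^ r
      = (a.choose r : ℝ) / (m:ℝ) ^ r := by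
    rw [div_pow, mul_pow]
    field_simp
    ring
  rw [hsimp]
  rcases Nat.lt_or_ge r 2 with hr2 | hr2
  · -- r = 1
    have hr : r = 1 := by omega
    subst hr
    have hnat : 3 * a ≤ m := by omega
    rw [Nat.choose_one_right, pow_one]
    rw [div_le_div_iff₀ hmR (by norm_num)]
    have : (3:ℝ) * a ≤ (m:ℝ) := by exact_mod_cast hnat
    linarith
  · -- r ≥ 2
    have hm5 : 5 ≤ m := by omega
    have hnat : 96 * a ≤ 15 * (r * m) := by
      have hcomm : m * r = r * m := Nat.mul_comm m r
      have hq : 10 ≤ r * m := by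
        calc 10 = 2 * 5 := rfl
          _ ≤ r * m := Nat.mul_le_mul hr2 hm5
      omega
    have hrR : (0:ℝ) < (r:ℝ) := by exact_mod_cast (by omega : 0 < r)
    have hfacpos : (0:ℝ) < (r.factorial : ℝ) := by exact_mod_cast r.factorial_pos
    have h1 : (a.choose r : ℝ) ≤ (a:ℝ)^r / (r.factorial : ℝ) := by
      rw [le_div_iff₀ hfacpos]
      exact choose_le_bound a r
    have h2 : (a:ℝ)^r / (r.factorial : ℝ) / (m:ℝ)^r ≤ (3 * (a:ℝ) / ((r:ℝ) * (m:ℝ))) ^ r := by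
      rw [div_pow, mul_pow, mul_pow, div_div]
      rw [div_le_div_iff₀ (by positivity) (by positivity)]
      have hps := pow_self_le_three_pow_mul_factorial r
      calc (a:ℝ)^r * ((r:ℝ)^r * (m:ℝ)^r)
          ≤ (a:ℝ)^r * ((3:ℝ)^r * (r.factorial:ℝ) * (m:ℝ)^r) := by
            apply mul_le_mul_of_nonneg_left _ (by positivity)
            apply mul_le_mul_of_nonneg_right hps (by positivity)
        _ = 3^r * (a:ℝ)^r * ((r.factorial:ℝ) * (m:ℝ)^r) := by ring
    have h3 : 3 * (a:ℝ) / ((r:ℝ) * (m:ℝ)) ≤ 1/2 := by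
      rw [div_le_div_iff₀ (by positivity) (by norm_num)]
      have : (96:ℝ) * a ≤ 15 * ((r:ℝ) * (m:ℝ)) := by exact_mod_cast hnat
      linarith
    have h4 : (3 * (a:ℝ) / ((r:ℝ) * (m:ℝ))) ^ r ≤ (1/2 : ℝ) ^ r :=
      pow_le_pow_left₀ (by positivity) h3 r
    have h5 : ((1:ℝ)/2) ^ r ≤ (1/2 : ℝ)^2 :=
      pow_le_pow_of_le_one (by norm_num) (by norm_num) hr2
    have h6 : (a.choose r : ℝ) / (m:ℝ)^r ≤ (a:ℝ)^r / (r.factorial : ℝ) / (m:ℝ)^r := by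
      gcongr
    calc (a.choose r : ℝ) / (m:ℝ)^r ≤ (a:ℝ)^r / (r.factorial : ℝ) / (m:ℝ)^r := h6
      _ ≤ (3 * (a:ℝ) / ((r:ℝ) * (m:ℝ))) ^ r := h2
      _ ≤ (1/2:ℝ)^r := h4
      _ ≤ (1/2:ℝ)^2 := h5
      _ ≤ 1/3 := by norm_num

end Arith











section Fired

open PP PPAux

lemma fired_bound {k : ℕ} (hk : 2 ≤ k) {Ω : Type*} [MeasurableSpace Ω] (μ : Measure Ω)
    [IsProbabilityMeasure μ] (e : ℕ → Ω → Fin (2*k) × Fin (2*k))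
    (hs : IsUniformSched (lollipop k) μ e) {a : ℕ}
    (ha : a = 1 + (numEdges (lollipop k) * (k-1)) / 32) :
    μ {ω | ChainTo hk (fun s => e s ω) (k-1) a} ≤ ENNReal.ofReal (1/3) := by
  classical
  set r : ℕ := k - 1 with hr
  set m : ℕ := numEdges (lollipop k) with hm
  set q : ℝ≥0∞ := ENNReal.ofReal (1/(2*(m:ℝ))) with hq
  set pick : Fin r → Bool → Fin (2*k) × Fin (2*k) := fun i o =>
    if o then lolQ k hk i.val else (lolQ k hk i.val).swap with hpick
  have hmass : ∀ (i : Fin r) (o : Bool), mass (lollipop k) (pick i o) = q := by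
    intro i o
    have hadj := lolQ_adj hk (i.isLt : i.val < k - 1)
    cases o
    · have hadj' : (lollipop k).Adj ((lolQ k hk i.val).swap).1 ((lolQ k hk i.val).swap).2 := by
        rw [Prod.fst_swap, Prod.snd_swap]
        exact hadj.symm
      simp only [hpick, Bool.false_eq_true, if_false, mass, hadj', if_pos, hq, hm]
    · simp only [hpick, if_true, mass, hadj, if_pos, hq, hm]
  set T : Finset (Fin r → Fin a) := Finset.univ.filter StrictMono with hT
  have hsub : {ω | ChainTo hk (fun s => e s ω) r a}
      ⊆ ⋃ τ ∈ T, ⋃ o ∈ (Finset.univ : Finset (Fin r → Bool)),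
          ⋂ i : Fin r, e ((τ i : ℕ)) ⁻¹' {pick i (o i)} := by
    rintro ω ⟨ts, hmono, hlt, hfire⟩
    set τ : Fin r → Fin a := fun i => ⟨ts i, hlt i⟩ with hτ
    have hτT : τ ∈ T := by
      rw [hT, Finset.mem_filter]
      refine ⟨Finset.mem_univ _, fun i j hij => ?_⟩
      rw [Fin.lt_def]
      exact hmono hij
    set o : Fin r → Bool := fun i => decide (e (ts i) ω = lolQ k hk i.val) with ho
    refine Set.mem_biUnion hτT ?_
    refine Set.mem_biUnion (Finset.mem_univ o) ?_
    refine Set.mem_iInter.mpr fun i => ?_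
    simp only [Set.mem_preimage, Set.mem_singleton_iff]
    by_cases hdec : e (ts i) ω = lolQ k hk i.val
    · have : o i = true := by rw [ho]; exact decide_eq_true hdec
      rw [this]
      simpa [hpick] using hdec
    · have : o i = false := by rw [ho]; exact decide_eq_false hdec
      rw [this]
      rcases hfire i with hf | hf
      · exact absurd hf hdec
      · simpa [hpick] using hf
  have hstep : ∀ τ ∈ T, ∀ o : Fin r → Bool,
      μ (⋂ i : Fin r, e ((τ i : ℕ)) ⁻¹' {pick i (o i)}) = q ^ r := by
    intro τ hτ o
    have hmonoτ : StrictMono τ := (Finset.mem_filter.mp hτ).2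
    have hinj : Function.Injective (fun i => ((τ i : ℕ))) := by
      intro i j hij
      exact hmonoτ.injective (Fin.ext hij)
    rw [meas_iInter_fin hs _ hinj]
    rw [Finset.prod_congr rfl (fun i _ => hmass i (o i))]
    simp [Finset.prod_const]
  have hbound : μ {ω | ChainTo hk (fun s => e s ω) r a}
      ≤ (T.card : ℝ≥0∞) * ((2^r : ℝ≥0∞) * q ^ r) := by
    refine (measure_mono hsub).trans ?_
    refine (measure_biUnion_finset_le T _).trans ?_
    have hinner : ∀ τ ∈ T,
        μ (⋃ o ∈ (Finset.univ : Finset (Fin r → Bool)),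
          ⋂ i : Fin r, e ((τ i : ℕ)) ⁻¹' {pick i (o i)}) ≤ (2^r : ℝ≥0∞) * q ^ r := by
      intro τ hτ
      refine (measure_biUnion_finset_le _ _).trans ?_
      rw [Finset.sum_congr rfl (fun o _ => hstep τ hτ o), Finset.sum_const]
      rw [Finset.card_univ]
      have hcard : Fintype.card (Fin r → Bool) = 2 ^ r := by
        rw [Fintype.card_fun]
        simp
      rw [hcard, nsmul_eq_mul]
      push_cast
      rfl
    calc ∑ τ ∈ T, μ (⋃ o ∈ (Finset.univ : Finset (Fin r → Bool)),
          ⋂ i : Fin r, e ((τ i : ℕ)) ⁻¹' {pick i (o i)})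
        ≤ ∑ _τ ∈ T, (2^r : ℝ≥0∞) * q ^ r := Finset.sum_le_sum hinner
      _ = (T.card : ℝ≥0∞) * ((2^r : ℝ≥0∞) * q ^ r) := by
          rw [Finset.sum_const, nsmul_eq_mul]
  have hTcard : T.card ≤ a.choose r := by
    have hmaps : ∀ τ ∈ T, (Finset.image τ Finset.univ)
        ∈ Finset.powersetCard r (Finset.univ : Finset (Fin a)) := by
      intro τ hτ
      rw [Finset.mem_powersetCard]
      refine ⟨Finset.subset_univ _, ?_⟩
      rw [Finset.card_image_of_injective _ (Finset.mem_filter.mp hτ).2.injective]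
      simp
    have hinjOn : Set.InjOn (fun τ : Fin r → Fin a => Finset.image τ Finset.univ) (T : Set (Fin r → Fin a)) := by
      intro τ₁ h₁ τ₂ h₂ himg
      have hm₁ : StrictMono τ₁ := (Finset.mem_filter.mp h₁).2
      have hm₂ : StrictMono τ₂ := (Finset.mem_filter.mp h₂).2
      have hc₁ : (Finset.image τ₁ Finset.univ).card = r := by
        rw [Finset.card_image_of_injective _ hm₁.injective]; simp
      have hmem₁ : ∀ i, τ₁ i ∈ Finset.image τ₁ Finset.univ :=
        fun i => Finset.mem_image_of_mem _ (Finset.mem_univ i)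
      have himg' : Finset.image τ₁ Finset.univ = Finset.image τ₂ Finset.univ := himg
      have hmem₂ : ∀ i, τ₂ i ∈ Finset.image τ₁ Finset.univ := by
        intro i
        rw [himg']
        exact Finset.mem_image_of_mem _ (Finset.mem_univ i)
      have e₁ := Finset.orderEmbOfFin_unique hc₁ hmem₁ hm₁
      have e₂ := Finset.orderEmbOfFin_unique hc₁ hmem₂ hm₂
      rw [e₁, e₂]
    have := Finset.card_le_card_of_injOn _ hmaps hinjOn
    rwa [Finset.card_powersetCard, Finset.card_univ, Fintype.card_fin] at this
  have hm2r : 2*r + 1 ≤ m := by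
    have := numEdges_lollipop_ge hk
    omega
  have hfinal : (T.card : ℝ≥0∞) * ((2^r : ℝ≥0∞) * q ^ r) ≤ ENNReal.ofReal (1/3) := by
    have h1 : (T.card : ℝ≥0∞) * ((2^r : ℝ≥0∞) * q ^ r)
        ≤ (a.choose r : ℝ≥0∞) * ((2^r : ℝ≥0∞) * q ^ r) := by
      gcongr
    refine h1.trans ?_
    have h2 : (a.choose r : ℝ≥0∞) * ((2^r : ℝ≥0∞) * q ^ r)
        = ENNReal.ofReal ((a.choose r : ℝ) * 2 ^ r * (1 / (2 * (m:ℝ))) ^ r) := by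
      rw [hq, ← ENNReal.ofReal_pow (by positivity)]
      rw [show ((a.choose r : ℝ≥0∞)) = ENNReal.ofReal ((a.choose r : ℝ)) by
        rw [ENNReal.ofReal_natCast]]
      rw [show ((2:ℝ≥0∞)^r) = ENNReal.ofReal ((2:ℝ)^r) by
        rw [ENNReal.ofReal_pow (by norm_num), ENNReal.ofReal_ofNat]]
      rw [← ENNReal.ofReal_mul (by positivity), ← ENNReal.ofReal_mul (by positivity)]
      congr 1
      ring

    rw [h2]
    exact ENNReal.ofReal_le_ofReal (key_real (by omega) hm2r ha)
  exact hbound.trans hfinal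

end Fired


section Final

open PP PPAux

lemma final_step {k : ℕ} (hk : 2 ≤ k) {Λ : Type*} (P : Protocol Λ)
    {Ω : Type*} [MeasurableSpace Ω] (μ : Measure Ω) [IsProbabilityMeasure μ]
    (e : ℕ → Ω → Fin (2*k) × Fin (2*k)) (f : Fin (2*k) → Bool) {a : ℕ}
    (hA : μ {ω | ∃ t, t < a ∧ IsStable (lollipop k) P.trans P.output
        (exec P.trans (initConfig P f) (fun s => e s ω) t)} ≤ ENNReal.ofReal (33/48))
    (harith : (1/1024 : ℝ) * (numEdges (lollipop k) : ℝ) * (k : ℝ) ≤ (a:ℝ) * (1/4)) :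
    ENNReal.ofReal ((1/1024 : ℝ) * (numEdges (lollipop k) : ℝ) * (k : ℝ))
      ≤ expStab (lollipop k) P μ e f := by
  classical
  set G := lollipop k
  set A : Set Ω := {ω | ∃ t, t < a ∧ IsStable G P.trans P.output
    (exec P.trans (initConfig P f) (fun s => e s ω) t)} with hAdef
  set M : Set Ω := (toMeasurable μ A)ᶜ with hM
  have hMmeas : MeasurableSet M := (measurableSet_toMeasurable μ A).compl
  have hMsub : M ⊆ Aᶜ := Set.compl_subset_compl.mpr (subset_toMeasurable μ A)
  have hμM : ENNReal.ofReal (1/4) ≤ μ M := by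
    have h1 : μ (toMeasurable μ A) + μ M = 1 := by
      rw [hM, measure_add_measure_compl (measurableSet_toMeasurable μ A), measure_univ]
    have h2 : μ (toMeasurable μ A) ≤ ENNReal.ofReal (33/48) := by
      rw [measure_toMeasurable]
      exact hA
    have h3 : (1:ℝ≥0∞) ≤ ENNReal.ofReal (33/48) + μ M := by
      rw [← h1]
      exact add_le_add_left h2 _
    have h4 : (1:ℝ≥0∞) - ENNReal.ofReal (33/48) ≤ μ M := tsub_le_iff_left.mpr h3
    have h5 : (1:ℝ≥0∞) - ENNReal.ofReal (33/48) = ENNReal.ofReal (15/48) := by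
      rw [← ENNReal.ofReal_one, ← ENNReal.ofReal_sub _ (by norm_num : (0:ℝ) ≤ 33/48)]
      norm_num
    rw [h5] at h4
    exact (ENNReal.ofReal_le_ofReal (by norm_num)).trans h4
  have hpoint : M.indicator (fun _ => (a : ℝ≥0∞))
      ≤ fun ω => stabTime G P.trans P.output (initConfig P f) (fun s => e s ω) := by
    intro ω
    by_cases hω : ω ∈ M
    · rw [Set.indicator_of_mem hω]
      apply stabTime_ge
      intro t ht hst
      exact (hMsub hω) ⟨t, ht, hst⟩
    · rw [Set.indicator_of_notMem hω]
      exact zero_le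
  have hint : (a : ℝ≥0∞) * μ M ≤ expStab G P μ e f := by
    rw [expStab]
    refine le_trans (le_of_eq ?_) (lintegral_mono hpoint)
    rw [lintegral_indicator_const hMmeas]
  calc ENNReal.ofReal ((1/1024 : ℝ) * (numEdges (lollipop k) : ℝ) * (k : ℝ))
      ≤ ENNReal.ofReal ((a:ℝ) * (1/4)) := ENNReal.ofReal_le_ofReal harith
    _ = (a : ℝ≥0∞) * ENNReal.ofReal (1/4) := by
        rw [ENNReal.ofReal_mul (by positivity), ENNReal.ofReal_natCast]
    _ ≤ (a : ℝ≥0∞) * μ M := by gcongr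
    _ ≤ expStab G P μ e f := hint

lemma arith_nat {k m a : ℕ} (hk : 2 ≤ k) (hm : 2*k - 1 ≤ m)
    (ha : a = 1 + (m * (k-1)) / 32) :
    (1/1024 : ℝ) * (m : ℝ) * (k : ℝ) ≤ (a:ℝ) * (1/4) := by
  have hk1 : k = (k-1) + 1 := by omega
  have hmk : m * k = m * (k-1) + m := by
    conv_lhs => rw [hk1]
    rw [Nat.mul_succ]
  have hmq : m ≤ m * (k-1) := Nat.le_mul_of_pos_right m (by omega)
  have hnat : m * k ≤ 256 * a := by omega
  have hcast : ((m * k : ℕ) : ℝ) ≤ ((256 * a : ℕ) : ℝ) := by exact_mod_cast hnat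
  push_cast at hcast
  linarith

end Final


open PP in
/-- an `Ω(D·n²)` time lower bound on the lollipop graph. -/
theorem stmt1 :
    ∃ c : ℝ, 0 < c ∧
      ∀ k : ℕ, 2 ≤ k →
        ∀ (Λ : Type) (P : Protocol Λ)
          (Ω : Type) [MeasurableSpace Ω] (μ : Measure Ω) [IsProbabilityMeasure μ]
          (e : ℕ → Ω → Fin (2 * k) × Fin (2 * k)),
          IsUniformSched (lollipop k) μ e → SolvesMajority (lollipop k) P μ e →
          ∃ f : Fin (2 * k) → Bool, 0 < bias f ∧
            ENNReal.ofReal (c * (numEdges (lollipop k) : ℝ) * (k : ℝ))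
              ≤ expStab (lollipop k) P μ e f := by
  classical
  refine ⟨1/1024, by norm_num, ?_⟩
  intro k hk Λ P Ω _inst μ _inst2 e hsched hsolve
  set m := numEdges (lollipop k) with hm
  have hm2k : 2*k - 1 ≤ m := numEdges_lollipop_ge hk
  have hmpos : 0 < m := by omega
  set a := 1 + (m * (k-1)) / 32 with ha
  set G := lollipop k with hG
  have hSA1 := hsolve (fA k) (bias_fA_pos hk)
  have hSB1 := hsolve (fB k) (bias_fB_pos hk)
  -- truncated stabilization events
  set SA' : ℕ → Set Ω := fun j => {ω | ∃ t, t ≤ j ∧ (IsStable G P.trans P.output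
      (exec P.trans (initConfig P (fA k)) (fun s => e s ω) t) ∧
    ∀ v, P.output (exec P.trans (initConfig P (fA k)) (fun s => e s ω) t v)
      = majOf (fA k))} with hSA'
  set SB' : ℕ → Set Ω := fun j => {ω | ∃ t, t ≤ j ∧ (IsStable G P.trans P.output
      (exec P.trans (initConfig P (fB k)) (fun s => e s ω) t) ∧
    ∀ v, P.output (exec P.trans (initConfig P (fB k)) (fun s => e s ω) t v)
      = majOf (fB k))} with hSB'
  have hmonoA : Monotone SA' := by
    intro i j hij ω hω
    obtain ⟨t, ht, h⟩ := hω
    exact ⟨t, ht.trans hij, h⟩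
  have hmonoB : Monotone SB' := by
    intro i j hij ω hω
    obtain ⟨t, ht, h⟩ := hω
    exact ⟨t, ht.trans hij, h⟩
  have hsupA : ⨆ j, μ (SA' j) = 1 := by
    rw [← hmonoA.measure_iUnion, ← hSA1]
    congr 1
    ext ω
    simp only [hSA', Set.mem_iUnion, Set.mem_setOf_eq]
    constructor
    · rintro ⟨j, t, _, h⟩
      exact ⟨t, h⟩
    · rintro ⟨t, h⟩
      exact ⟨t, t, le_rfl, h⟩
  have hsupB : ⨆ j, μ (SB' j) = 1 := by
    rw [← hmonoB.measure_iUnion, ← hSB1]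
    congr 1
    ext ω
    simp only [hSB', Set.mem_iUnion, Set.mem_setOf_eq]
    constructor
    · rintro ⟨j, t, _, h⟩
      exact ⟨t, h⟩
    · rintro ⟨t, h⟩
      exact ⟨t, t, le_rfl, h⟩
  obtain ⟨jA, hjA⟩ : ∃ j, ENNReal.ofReal (47/48) < μ (SA' j) := by
    apply lt_iSup_iff.mp
    rw [hsupA]
    exact ENNReal.ofReal_lt_one.mpr (by norm_num)
  obtain ⟨jB, hjB⟩ : ∃ j, ENNReal.ofReal (47/48) < μ (SB' j) := by
    apply lt_iSup_iff.mp
    rw [hsupB]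
    exact ENNReal.ofReal_lt_one.mpr (by norm_num)
  set w := a + jA + jB + 1 with hw
  set extb : (Fin w → Fin (2*k) × Fin (2*k)) → ℕ → Fin (2*k) × Fin (2*k) :=
    fun b s => if h : s < w then b ⟨s, h⟩ else (⟨0, by omega⟩, ⟨0, by omega⟩) with hextb
  have hexec : ∀ (x0 : Fin (2*k) → Λ) (ω : Ω) (t : ℕ), t ≤ w →
      exec P.trans x0 (fun s => e s ω) t
        = exec P.trans x0 (extb (fun s : Fin w => e s ω)) t := by
    intro x0 ω t htw
    apply PPAux.exec_congr
    intro s hs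
    simp only [hextb, dif_pos (lt_of_lt_of_le hs htw)]
  set BA : Finset (Fin w → Fin (2*k) × Fin (2*k)) := Finset.univ.filter
    (fun b => ∃ t, t < a ∧ IsStable G P.trans P.output
      (exec P.trans (initConfig P (fA k)) (extb b) t)) with hBA
  set BB : Finset (Fin w → Fin (2*k) × Fin (2*k)) := Finset.univ.filter
    (fun b => ∃ t, t < a ∧ IsStable G P.trans P.output
      (exec P.trans (initConfig P (fB k)) (extb b) t)) with hBB
  set BSA : Finset (Fin w → Fin (2*k) × Fin (2*k)) := Finset.univ.filter
    (fun b => ∃ t, t ≤ jA ∧ (IsStable G P.trans P.output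
        (exec P.trans (initConfig P (fA k)) (extb b) t) ∧
      ∀ v, P.output (exec P.trans (initConfig P (fA k)) (extb b) t v)
        = majOf (fA k))) with hBSA
  set BSB : Finset (Fin w → Fin (2*k) × Fin (2*k)) := Finset.univ.filter
    (fun b => ∃ t, t ≤ jB ∧ (IsStable G P.trans P.output
        (exec P.trans (initConfig P (fB k)) (extb b) t) ∧
      ∀ v, P.output (exec P.trans (initConfig P (fB k)) (extb b) t v)
        = majOf (fB k))) with hBSB
  have hBAeq : {ω : Ω | ∃ t, t < a ∧ IsStable G P.trans P.output
      (exec P.trans (initConfig P (fA k)) (fun s => e s ω) t)}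
      = {ω : Ω | (fun s : Fin w => e s ω) ∈ BA} := by
    ext ω
    simp only [Set.mem_setOf_eq, hBA, Finset.mem_filter, Finset.mem_univ, true_and]
    constructor
    · rintro ⟨t, ht, hst⟩
      exact ⟨t, ht, by rw [← hexec _ ω t (by omega)]; exact hst⟩
    · rintro ⟨t, ht, hst⟩
      exact ⟨t, ht, by rw [hexec _ ω t (by omega)]; exact hst⟩
  have hBBeq : {ω : Ω | ∃ t, t < a ∧ IsStable G P.trans P.output
      (exec P.trans (initConfig P (fB k)) (fun s => e s ω) t)}
      = {ω : Ω | (fun s : Fin w => e s ω) ∈ BB} := by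
    ext ω
    simp only [Set.mem_setOf_eq, hBB, Finset.mem_filter, Finset.mem_univ, true_and]
    constructor
    · rintro ⟨t, ht, hst⟩
      exact ⟨t, ht, by rw [← hexec _ ω t (by omega)]; exact hst⟩
    · rintro ⟨t, ht, hst⟩
      exact ⟨t, ht, by rw [hexec _ ω t (by omega)]; exact hst⟩
  have hBSAeq : SA' jA = {ω : Ω | (fun s : Fin w => e s ω) ∈ BSA} := by
    ext ω
    simp only [hSA', Set.mem_setOf_eq, hBSA, Finset.mem_filter, Finset.mem_univ, true_and]
    constructor
    · rintro ⟨t, ht, hst, hmaj⟩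
      rw [hexec _ ω t (by omega)] at hst hmaj
      exact ⟨t, ht, hst, hmaj⟩
    · rintro ⟨t, ht, hst, hmaj⟩
      rw [← hexec _ ω t (by omega)] at hst hmaj
      exact ⟨t, ht, hst, hmaj⟩
  have hBSBeq : SB' jB = {ω : Ω | (fun s : Fin w => e s ω) ∈ BSB} := by
    ext ω
    simp only [hSB', Set.mem_setOf_eq, hBSB, Finset.mem_filter, Finset.mem_univ, true_and]
    constructor
    · rintro ⟨t, ht, hst, hmaj⟩
      rw [hexec _ ω t (by omega)] at hst hmaj
      exact ⟨t, ht, hst, hmaj⟩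
    · rintro ⟨t, ht, hst, hmaj⟩
      rw [← hexec _ ω t (by omega)] at hst hmaj
      exact ⟨t, ht, hst, hmaj⟩
  -- complement bounds for the stabilization events
  have hprecompl : ∀ B : Finset (Fin w → Fin (2*k) × Fin (2*k)),
      μ {ω : Ω | (fun s : Fin w => e s ω) ∈ B}
        + μ {ω : Ω | (fun s : Fin w => e s ω) ∈ Bᶜ} = 1 := by
    intro B
    rw [meas_cyl hsched hmpos B, meas_cyl hsched hmpos Bᶜ, Finset.sum_add_sum_compl]
    exact sum_weight_univ hmpos w
  have hcomplA : μ {ω : Ω | (fun s : Fin w => e s ω) ∈ BSAᶜ} ≤ ENNReal.ofReal (1/48) := by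
    have h1 := hprecompl BSA
    have h2 : ENNReal.ofReal (47/48) ≤ μ {ω : Ω | (fun s : Fin w => e s ω) ∈ BSA} := by
      rw [← hBSAeq]
      exact hjA.le
    have h3 : μ {ω : Ω | (fun s : Fin w => e s ω) ∈ BSAᶜ}
        = 1 - μ {ω : Ω | (fun s : Fin w => e s ω) ∈ BSA} :=
      ENNReal.eq_sub_of_add_eq (measure_ne_top μ _) (by rw [add_comm]; exact h1)
    rw [h3]
    calc 1 - μ {ω : Ω | (fun s : Fin w => e s ω) ∈ BSA}
        ≤ 1 - ENNReal.ofReal (47/48) := tsub_le_tsub_left h2 1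
      _ = ENNReal.ofReal (1/48) := by
          rw [← ENNReal.ofReal_one, ← ENNReal.ofReal_sub _ (by norm_num : (0:ℝ) ≤ 47/48)]
          norm_num
  have hcomplB : μ {ω : Ω | (fun s : Fin w => e s ω) ∈ BSBᶜ} ≤ ENNReal.ofReal (1/48) := by
    have h1 := hprecompl BSB
    have h2 : ENNReal.ofReal (47/48) ≤ μ {ω : Ω | (fun s : Fin w => e s ω) ∈ BSB} := by
      rw [← hBSBeq]
      exact hjB.le
    have h3 : μ {ω : Ω | (fun s : Fin w => e s ω) ∈ BSBᶜ}
        = 1 - μ {ω : Ω | (fun s : Fin w => e s ω) ∈ BSB} :=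
      ENNReal.eq_sub_of_add_eq (measure_ne_top μ _) (by rw [add_comm]; exact h1)
    rw [h3]
    calc 1 - μ {ω : Ω | (fun s : Fin w => e s ω) ∈ BSB}
        ≤ 1 - ENNReal.ofReal (47/48) := tsub_le_tsub_left h2 1
      _ = ENNReal.ofReal (1/48) := by
          rw [← ENNReal.ofReal_one, ← ENNReal.ofReal_sub _ (by norm_num : (0:ℝ) ≤ 47/48)]
          norm_num
  -- adjacency is a.s.
  set AdjS : Set Ω := {ω | ∀ s, s < w → G.Adj (e s ω).1 (e s ω).2} with hAdjS
  have hAdjc : μ AdjSᶜ = 0 := by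
    have hsub : AdjSᶜ ⊆ ⋃ s ∈ Finset.range w,
        ⋃ p ∈ (Finset.univ.filter fun p : Fin (2*k) × Fin (2*k) => ¬ G.Adj p.1 p.2),
          {ω : Ω | e s ω = p} := by
      intro ω hω
      simp only [hAdjS, Set.mem_compl_iff, Set.mem_setOf_eq, not_forall] at hω
      obtain ⟨s, hs, hnadj⟩ := hω
      refine Set.mem_biUnion (Finset.mem_range.mpr hs) ?_
      refine Set.mem_biUnion (Finset.mem_filter.mpr ⟨Finset.mem_univ _, hnadj⟩) rfl
    refine le_antisymm ((measure_mono hsub).trans ?_) (zero_le)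
    refine (measure_biUnion_finset_le _ _).trans ?_
    refine le_of_eq (Finset.sum_eq_zero ?_)
    intro s _
    refine le_antisymm ((measure_biUnion_finset_le _ _).trans ?_) (zero_le)
    refine le_of_eq (Finset.sum_eq_zero ?_)
    intro p hp
    exact hsched.2.2 s p (Finset.mem_filter.mp hp).2
  -- the core inclusion
  have hcore : {ω : Ω | (fun s : Fin w => e s ω) ∈ BA}
      ∩ {ω : Ω | (fun s : Fin w => e s ω) ∈ BB} ∩ SA' jA ∩ SB' jB ∩ AdjS
      ⊆ {ω : Ω | ChainTo hk (fun s => e s ω) (k-1) a} := by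
    rintro ω ⟨⟨⟨⟨hωA, hωB⟩, hωSA⟩, hωSB⟩, hωadj⟩
    have hωA' : ω ∈ {ω : Ω | ∃ t, t < a ∧ IsStable G P.trans P.output
        (exec P.trans (initConfig P (fA k)) (fun s => e s ω) t)} := by
      rw [hBAeq]; exact hωA
    have hωB' : ω ∈ {ω : Ω | ∃ t, t < a ∧ IsStable G P.trans P.output
        (exec P.trans (initConfig P (fB k)) (fun s => e s ω) t)} := by
      rw [hBBeq]; exact hωB
    exact core_det hk P (fun s => e s ω) (fun s hs => hωadj s (by omega))
      hωA' hωB' hωSA hωSB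
  have hFired : μ {ω : Ω | ChainTo hk (fun s => e s ω) (k-1) a} ≤ ENNReal.ofReal (1/3) :=
    fired_bound hk μ e hsched ha
  -- bound the intersection
  have hXbound : μ ({ω : Ω | (fun s : Fin w => e s ω) ∈ BA}
      ∩ {ω : Ω | (fun s : Fin w => e s ω) ∈ BB}) ≤ ENNReal.ofReal (3/8) := by
    have hcover : {ω : Ω | (fun s : Fin w => e s ω) ∈ BA}
        ∩ {ω : Ω | (fun s : Fin w => e s ω) ∈ BB}
        ⊆ {ω : Ω | ChainTo hk (fun s => e s ω) (k-1) a}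
          ∪ ({ω : Ω | (fun s : Fin w => e s ω) ∈ BSAᶜ}
          ∪ ({ω : Ω | (fun s : Fin w => e s ω) ∈ BSBᶜ} ∪ AdjSᶜ)) := by
      intro ω hω
      by_cases h1 : ω ∈ SA' jA
      · by_cases h2 : ω ∈ SB' jB
        · by_cases h3 : ω ∈ AdjS
          · exact Or.inl (hcore ⟨⟨⟨hω, h1⟩, h2⟩, h3⟩)
          · exact Or.inr (Or.inr (Or.inr h3))
        · refine Or.inr (Or.inr (Or.inl ?_))
          rw [hBSBeq] at h2
          simpa [Finset.mem_compl] using h2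
      · refine Or.inr (Or.inl ?_)
        rw [hBSAeq] at h1
        simpa [Finset.mem_compl] using h1
    calc μ ({ω : Ω | (fun s : Fin w => e s ω) ∈ BA}
        ∩ {ω : Ω | (fun s : Fin w => e s ω) ∈ BB})
        ≤ μ {ω : Ω | ChainTo hk (fun s => e s ω) (k-1) a}
          + (μ {ω : Ω | (fun s : Fin w => e s ω) ∈ BSAᶜ}
          + (μ {ω : Ω | (fun s : Fin w => e s ω) ∈ BSBᶜ} + μ AdjSᶜ)) := by
          refine (measure_mono hcover).trans ?_
          refine (measure_union_le _ _).trans ?_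
          gcongr
          refine (measure_union_le _ _).trans ?_
          gcongr
          exact measure_union_le _ _
      _ ≤ ENNReal.ofReal (1/3) + (ENNReal.ofReal (1/48) + (ENNReal.ofReal (1/48) + 0)) := by
          gcongr
          exact le_of_eq hAdjc
      _ = ENNReal.ofReal (3/8) := by
          rw [add_zero, ← ENNReal.ofReal_add (by norm_num) (by norm_num),
            ← ENNReal.ofReal_add (by norm_num) (by norm_num)]
          norm_num
  -- the two events cannot both be large
  have hpreInter : {ω : Ω | (fun s : Fin w => e s ω) ∈ BA}
      ∩ {ω : Ω | (fun s : Fin w => e s ω) ∈ BB}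
      = {ω : Ω | (fun s : Fin w => e s ω) ∈ BA ∩ BB} := by
    ext ω
    simp [Finset.mem_inter]
  have hsum2 : μ {ω : Ω | (fun s : Fin w => e s ω) ∈ BA}
      + μ {ω : Ω | (fun s : Fin w => e s ω) ∈ BB} ≤ 1 + ENNReal.ofReal (3/8) := by
    rw [meas_cyl hsched hmpos BA, meas_cyl hsched hmpos BB]
    rw [← Finset.sum_union_inter]
    have hu : ∑ b ∈ BA ∪ BB, ∏ s : Fin w, mass G (b s) ≤ 1 := by
      rw [← sum_weight_univ (G := G) hmpos w]
      exact Finset.sum_le_sum_of_subset (Finset.subset_univ _)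
    have hi : ∑ b ∈ BA ∩ BB, ∏ s : Fin w, mass G (b s) ≤ ENNReal.ofReal (3/8) := by
      rw [← meas_cyl hsched hmpos (BA ∩ BB), ← hpreInter]
      exact hXbound
    exact add_le_add hu hi
  have hchoice : μ {ω : Ω | (fun s : Fin w => e s ω) ∈ BA} ≤ ENNReal.ofReal (33/48)
      ∨ μ {ω : Ω | (fun s : Fin w => e s ω) ∈ BB} ≤ ENNReal.ofReal (33/48) := by
    by_contra hcon
    push_neg at hcon
    have h1 := ENNReal.add_lt_add hcon.1 hcon.2
    have h2 : ENNReal.ofReal (33/48) + ENNReal.ofReal (33/48) = 1 + ENNReal.ofReal (3/8) := by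
      rw [← ENNReal.ofReal_add (by norm_num) (by norm_num), ← ENNReal.ofReal_one,
        ← ENNReal.ofReal_add (by norm_num) (by norm_num)]
      norm_num
    rw [h2] at h1
    exact absurd hsum2 (not_le.mpr h1)
  have harith := arith_nat (m := m) (a := a) hk hm2k ha
  rcases hchoice with hch | hch
  · refine ⟨fA k, bias_fA_pos hk, ?_⟩
    refine le_trans (le_of_eq ?_) (final_step hk P μ e (fA k) (by rw [hBAeq]; exact hch) harith)
    rfl
  · refine ⟨fB k, bias_fB_pos hk, ?_⟩
    refine le_trans (le_of_eq ?_) (final_step hk P μ e (fB k) (by rw [hBBeq]; exact hch) harith)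
    rfl
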